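/- arXiv:2503.17956 — 2 statements merged into one kernel-verified Lean document; each statement's English description precedes it below -/
import Mathlib

section
/- Let (Ω, μ) be a probability space and x a fixed input point. Let ĥ : Ω → Bool be measurable (the binary prediction of the model learned from training set ω at x), let y* : Bool be the (noiseless) optimal prediction at x, and let ḡ : Bool be a mode (main prediction) of ĥ under μ, i.e. μ{ω : ĥ(ω) = ḡ} ≥ 1/2. Define the bias B = (if ḡ ≠ y* then 1 else 0) and the variance V = μ{ω : ĥ(ω) ≠ ḡ}. Then the expected zero-one loss satisfies μ{ω : ĥ(ω) ≠ y*} = B + (1 − 2·B)·V. -/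
open MeasureTheory

/-- Domingos's decomposition of expected zero-one loss for two-class prediction
with zero noise: expected loss = bias + (1 - 2·bias)·variance, where the main
prediction is a mode of the predictions. -/
theorem zero_one_loss_bias_net_variance_decomposition
    {Ω : Type*} [MeasurableSpace Ω]
    (μ : Measure Ω) [IsProbabilityMeasure μ]
    (h : Ω → Bool) (hmeas : Measurable h)
    (ystar : Bool) (g : Bool)
    (hmode : μ {ω | h ω = g} ≥ 1 / 2)
    (B V : ℝ)
    (hB : B = if g ≠ ystar then 1 else 0)
    (hV : V = (μ {ω | h ω ≠ g}).toReal) :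
    (μ {ω | h ω ≠ ystar}).toReal = B + (1 - 2 * B) * V := by
  have hms : MeasurableSet {ω | h ω = g} := hmeas (measurableSet_singleton g)
  by_cases hgy : g = ystar
  · subst hgy
    simp only [ne_eq, not_true_eq_false, if_false] at hB
    subst hB
    rw [hV]; ring
  · simp only [ne_eq, hgy, not_false_eq_true, if_true] at hB
    subst hB
    have hset : {ω | h ω ≠ ystar} = {ω | h ω = g} := by
      ext ω
      simp only [Set.mem_setOf_eq]
      constructor
      · intro hne
        cases hb : h ω <;> cases g <;> cases ystar <;> simp_all
      · intro he; rw [he]; exact hgy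
    have hcompl : {ω | h ω ≠ g} = {ω | h ω = g}ᶜ := by
      ext ω; simp [Set.mem_setOf_eq]
    rw [hcompl, measure_compl hms (measure_ne_top μ _)] at hV
    rw [hset]
    have hle : μ {ω | h ω = g} ≤ 1 := prob_le_one
    have hfin : μ {ω | h ω = g} ≠ ⊤ := measure_ne_top μ _
    rw [measure_univ, ENNReal.toReal_sub_of_le hle (by simp), ENNReal.toReal_one] at hV
    rw [hV]; ring
end

section
/- Let (Ω, μ) and (Θ, ρ) be probability spaces and x a fixed input point. Let ĥ : Ω → Bool be measurable (the binary prediction learned from training set ω), let y : Θ → Bool be measurable (the noisy binary label at x), and let y* : Bool be the optimal prediction at x. Define the noise N = ρ{θ : y(θ) ≠ y*}, let ḡ : Bool be a mode of ĥ under μ (μ{ĥ = ḡ} ≥ 1/2), define the bias B = (if ḡ ≠ y* then 1 else 0) and the variance V = μ{ω : ĥ(ω) ≠ ḡ}. Then with respect to the product measure μ ⊗ ρ, the expected zero-one loss satisfies (μ⊗ρ){(ω,θ) : ĥ(ω) ≠ y(θ)} = (2·μ{ω : ĥ(ω) = y*} − 1)·N + B + (1 − 2·B)·V. -/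
open MeasureTheory

lemma compl_toReal {Ω : Type*} [MeasurableSpace Ω] (μ : Measure Ω)
    [IsProbabilityMeasure μ] (s : Set Ω) (hs : MeasurableSet s) :
    (μ sᶜ).toReal = 1 - (μ s).toReal := by
  have h1 : μ sᶜ = 1 - μ s := by
    rw [measure_compl hs (measure_ne_top μ s), measure_univ]
  rw [h1, ENNReal.toReal_sub_of_le prob_le_one ENNReal.one_ne_top]
  simp

/-- Domingos's decomposition of expected zero-one loss for two-class prediction
with label noise: expected loss = c₀·noise + bias + (1 - 2·bias)·variance, where
c₀ = 2·P_S(f̂_S(x) = y*) - 1. -/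
theorem zero_one_loss_noise_bias_variance_decomposition
    {Ω Θ : Type*} [MeasurableSpace Ω] [MeasurableSpace Θ]
    (μ : Measure Ω) (ρ : Measure Θ)
    [IsProbabilityMeasure μ] [IsProbabilityMeasure ρ]
    (h : Ω → Bool) (hmeas : Measurable h)
    (y : Θ → Bool) (ymeas : Measurable y)
    (ystar : Bool)
    (N : ℝ) (hN : N = (ρ {θ | y θ ≠ ystar}).toReal)
    (g : Bool) (hmode : μ {ω | h ω = g} ≥ 1 / 2)
    (B V : ℝ)
    (hB : B = if g ≠ ystar then 1 else 0)
    (hV : V = (μ {ω | h ω ≠ g}).toReal) :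
    ((μ.prod ρ) {p : Ω × Θ | h p.1 ≠ y p.2}).toReal
      = (2 * (μ {ω | h ω = ystar}).toReal - 1) * N + B + (1 - 2 * B) * V := by
  set a : ℝ := (μ {ω | h ω = ystar}).toReal with ha
  set q : ℝ := (ρ {θ | y θ = ystar}).toReal with hq
  have hSmeas : MeasurableSet {ω | h ω = ystar} :=
    hmeas (MeasurableSet.singleton ystar)
  have hTmeas : MeasurableSet {θ | y θ = ystar} :=
    ymeas (MeasurableSet.singleton ystar)
  have hScompl : {ω | h ω ≠ ystar} = {ω | h ω = ystar}ᶜ := rfl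
  have hTcompl : {θ | y θ ≠ ystar} = {θ | y θ = ystar}ᶜ := rfl
  have hSc : (μ {ω | h ω ≠ ystar}).toReal = 1 - a := by
    rw [hScompl, compl_toReal μ _ hSmeas]
  have hNval : N = 1 - q := by
    rw [hN, hTcompl, compl_toReal ρ _ hTmeas]
  -- split the set
  have hsplit : {p : Ω × Θ | h p.1 ≠ y p.2}
      = ({ω | h ω = ystar} ×ˢ {θ | y θ ≠ ystar})
        ∪ ({ω | h ω ≠ ystar} ×ˢ {θ | y θ = ystar}) := by
    ext ⟨ω, θ⟩
    simp only [Set.mem_setOf_eq, Set.mem_union, Set.mem_prod]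
    cases hb : h ω <;> cases yb : y θ <;> cases ystar <;> simp
  have hdisj : Disjoint ({ω | h ω = ystar} ×ˢ {θ | y θ ≠ ystar})
      ({ω | h ω ≠ ystar} ×ˢ {θ | y θ = ystar}) := by
    apply Set.disjoint_left.2
    rintro ⟨ω, θ⟩ ⟨h1, _⟩ ⟨h2, _⟩
    exact h2 h1
  have hmeas2 : MeasurableSet ({ω | h ω ≠ ystar} ×ˢ {θ | y θ = ystar}) :=
    (hSmeas.compl).prod hTmeas
  have hLHS : ((μ.prod ρ) {p : Ω × Θ | h p.1 ≠ y p.2}).toReal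
      = a * (1 - q) + (1 - a) * q := by
    rw [hsplit, measure_union hdisj hmeas2, Measure.prod_prod, Measure.prod_prod,
      ENNReal.toReal_add (by finiteness) (by finiteness),
      ENNReal.toReal_mul, ENNReal.toReal_mul, hSc, ← ha, ← hq, ← hN, hNval]
  rw [hLHS, hNval]
  -- now compute V and B by cases on whether g = ystar
  by_cases hg : g = ystar
  · have hBval : B = 0 := by simp [hB, hg]
    have hVval : V = 1 - a := by rw [hV, hg, hSc]
    rw [hBval, hVval]; ring
  · have hBval : B = 1 := by simp [hB, hg]
    have hVval : V = a := by
      have : {ω | h ω ≠ g} = {ω | h ω = ystar} := by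
        ext ω
        cases hb : h ω <;> cases g <;> cases ystar <;> simp_all
      rw [hV, this]
    rw [hBval, hVval]; ring
end
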